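/- Let $k \in [n]$ and let $\mathbf{x} = (x_1, \ldots, x_k)$ be $k$ distinct points on the unit circle. For an interval $I$ of the torus $\mathbb{R}/(2\pi)$, let $N_I(\mathbf{x})$ count the points with argument in $I$ and set $V_I(\mathbf{x}) = N_I(\mathbf{x}) - k|I|/(2\pi)$. Then $\sup_I |V_I(\mathbf{x})| - 4 \leq \frac{k}{\pi} d_\infty(\mathbf{x}, \boldsymbol{\Pi}_k) \leq 2\sup_I |V_I(\mathbf{x})| + 4$, where the supremum is over all closed intervals $I$ of the torus. -/

import Mathlib

open Real Finset

/-- Geodesic distance on the unit circle `Circle ⊆ ℂ`. -/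
noncomputable def gd (z w : Circle) : ℝ := |Complex.arg ((z : ℂ) / (w : ℂ))|

/-- Number of points of the configuration `x` lying in the closed arc of the
circle starting at angle `a` and of length `ℓ`. -/
noncomputable def NArc (k : ℕ) (x : Fin k → Circle) (a ℓ : ℝ) : ℕ :=
  Nat.card {i : Fin k // ∃ t ∈ Set.Icc (0 : ℝ) ℓ, x i = Circle.exp (a + t)}

/-- Discrepancy `V_I(x) = N_I(x) - k |I| / (2π)` of the arc of initial angle
`a` and length `ℓ`. -/
noncomputable def VArc (k : ℕ) (x : Fin k → Circle) (a ℓ : ℝ) : ℝ :=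
  (NArc k x a ℓ : ℝ) - k * ℓ / (2 * π)

/-- `d_∞` distance from a configuration to the set `Π_k` of regular
configurations. -/
noncomputable def dinftyPi (k : ℕ) (x : Fin k → Circle) : ℝ :=
  ⨅ σ : Equiv.Perm (Fin k), ⨆ i, gd (x i) (Circle.exp (2 * π * ((σ i : Fin k) : ℕ) / k))

/-! For a matching `σ` moving every point by at most `δ`, the points of `x` in an arc of length
`ℓ` are matched to grid points in the arc thickened by `δ` at both ends, of which there are at most
`k (ℓ + 2δ) / 2π + 1`; the same bound for the complementary arc gives the matching lower bound,
so `|V_I(x)| ≤ k δ / π + 1`.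
Conversely, with the angles `θ_(0) < ⋯ < θ_(k-1)` of the points taken in `[0, 2π)`, the arc
`[0, θ_(j)]` contains exactly `j + 1` points, so the bound `s` on the discrepancy puts `θ_(j)`
within `2π (s + 1) / k` of the grid angle `2π j / k`; the sorting permutation therefore witnesses
`d_∞(x, Π_k) ≤ 2π (s + 1) / k`. -/

def closedArc (a ℓ : ℝ) : Set Circle := {z | ∃ t ∈ Set.Icc (0 : ℝ) ℓ, z = Circle.exp (a + t)}

noncomputable def gridPt (k : ℕ) (j : Fin k) : Circle := Circle.exp (2 * π * (j : ℕ) / k)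

lemma NArc_eq_ncard (k : ℕ) (x : Fin k → Circle) (a ℓ : ℝ) :
    NArc k x a ℓ = (x ⁻¹' closedArc a ℓ).ncard :=
  Nat.card_coe_set_eq _

lemma Circle.exists_mem_Ico_exp_eq (a : ℝ) (z : Circle) :
    ∃ t ∈ Set.Ico a (a + 2 * π), Circle.exp t = z :=
  ⟨toIcoMod two_pi_pos a (Complex.arg z), toIcoMod_mem_Ico _ _ _,
    (Circle.periodic_exp.sub_zsmul_eq _).trans (Circle.exp_arg z)⟩

lemma closedArc_union_closedArc (a ℓ : ℝ) :
    closedArc a ℓ ∪ closedArc (a + ℓ) (2 * π - ℓ) = Set.univ := by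
  refine Set.eq_univ_of_forall fun z => ?_
  obtain ⟨t, ⟨hat, hta⟩, rfl⟩ := Circle.exists_mem_Ico_exp_eq a z
  rcases le_total (t - a) ℓ with h | h
  · exact Or.inl ⟨t - a, ⟨by linarith, h⟩, by ring_nf⟩
  · exact Or.inr ⟨t - a - ℓ, ⟨by linarith, by linarith⟩, by ring_nf⟩

lemma exp_mem_closedArc_zero_iff {θ ℓ : ℝ} (hθ : θ ∈ Set.Ico 0 (2 * π)) (hℓ : ℓ < 2 * π) :
    Circle.exp θ ∈ closedArc 0 ℓ ↔ θ ≤ ℓ := by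
  constructor
  · rintro ⟨t, ⟨ht0, htℓ⟩, h⟩
    rw [zero_add] at h
    have := Circle.exp_injOn_Ico (by simp) hθ ⟨ht0, htℓ.trans_lt hℓ⟩ h
    linarith
  · exact fun h => ⟨θ, ⟨hθ.1, h⟩, by rw [zero_add]⟩

lemma Circle.abs_arg_exp_le (r : ℝ) : |Complex.arg (Circle.exp r)| ≤ |r| := by
  have hπ := pi_pos
  rcases le_or_gt |r| π with h | h
  · rcases (abs_le.1 h).1.eq_or_lt with h1 | h1
    · rw [← h1, ← Circle.exp_add_two_pi, Circle.arg_exp (by linarith) (by linarith),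
        abs_of_nonneg (by linarith), abs_of_nonpos (by linarith)]
      linarith
    · rw [Circle.arg_exp h1 (abs_le.1 h).2]
  · exact (Complex.abs_arg_le_pi _).trans h.le

lemma gd_exp_exp_le (u v : ℝ) : gd (Circle.exp u) (Circle.exp v) ≤ |u - v| := by
  rw [gd, ← Circle.coe_div, ← Circle.exp_sub]
  exact Circle.abs_arg_exp_le _

lemma mem_closedArc_of_gd_le {z w : Circle} {a ℓ δ : ℝ} (hz : z ∈ closedArc a ℓ)
    (h : gd z w ≤ δ) : w ∈ closedArc (a - δ) (ℓ + 2 * δ) := by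
  obtain ⟨t, ⟨ht0, htℓ⟩, rfl⟩ := hz
  set e := Complex.arg (Circle.exp (a + t) / w : Circle)
  have hw : w = Circle.exp (a + t - e) := by
    rw [Circle.exp_sub, Circle.exp_arg, div_div_cancel]
  obtain ⟨he₁, he₂⟩ := abs_le.1 (show |e| ≤ δ from h)
  exact ⟨t - e + δ, ⟨by linarith, by linarith⟩, by rw [hw]; ring_nf⟩

lemma Int.card_Icc_ceil_floor_le {α : Type*} [Field α] [LinearOrder α] [IsStrictOrderedRing α]
    [FloorRing α] {a b : α} (hab : a ≤ b) :
    ((Finset.Icc ⌈a⌉ ⌊b⌋).card : α) ≤ b - a + 1 := by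
  have hnonneg : 0 ≤ ⌊b⌋ + 1 - ⌈a⌉ := by
    have := Int.ceil_le_floor_add_one a
    have := Int.floor_mono hab
    omega
  rw [Int.card_Icc, ← Int.cast_natCast, Int.toNat_of_nonneg hnonneg]
  push_cast
  linarith [Int.floor_le b, Int.le_ceil a]

open scoped Fin.IntCast in
/-- A grid point lies in the arc iff its index is `z mod k` for an integer `z` with
`2π z / k ∈ [a, a + ℓ]`. -/
lemma ncard_gridPt_mem_closedArc_le {k : ℕ} [NeZero k] (a : ℝ) {ℓ : ℝ} (hℓ : 0 ≤ ℓ) :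
    ({j | gridPt k j ∈ closedArc a ℓ}.ncard : ℝ) ≤ k * ℓ / (2 * π) + 1 := by
  have hsub : {j | gridPt k j ∈ closedArc a ℓ} ⊆ (fun z : ℤ => (z : Fin k)) ''
      ↑(Finset.Icc ⌈k * a / (2 * π)⌉ ⌊k * (a + ℓ) / (2 * π)⌋) := by
    rintro j ⟨t, ⟨ht0, htℓ⟩, hj⟩
    obtain ⟨m, hm⟩ := Circle.exp_eq_exp.1 hj
    have hz : ((j - m * k : ℤ) : ℝ) = k * (a + t) / (2 * π) := by
      have : (k : ℝ) ≠ 0 := Nat.cast_ne_zero.2 (NeZero.ne k)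
      push_cast
      field_simp at hm ⊢
      linarith
    refine ⟨j - m * k, Int.cast_mem_Icc_iff.1 ⟨?_, ?_⟩, ?_⟩
    · rw [hz]; gcongr; linarith
    · rw [hz]; gcongr
    · ext; simp [Fin.val_intCast, ← Int.natCast_mod, Nat.mod_eq_of_lt j.isLt]
  calc ({j | gridPt k j ∈ closedArc a ℓ}.ncard : ℝ)
      ≤ (Finset.Icc ⌈k * a / (2 * π)⌉ ⌊k * (a + ℓ) / (2 * π)⌋).card := by
        exact_mod_cast (Set.ncard_le_ncard hsub).trans
          ((Set.ncard_image_le (Finset.finite_toSet _)).trans (Set.ncard_coe_finset _).le)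
    _ ≤ k * (a + ℓ) / (2 * π) - k * a / (2 * π) + 1 :=
        Int.card_Icc_ceil_floor_le (by gcongr; linarith)
    _ = k * ℓ / (2 * π) + 1 := by ring

lemma Tuple.ncard_setOf_le_sort {n : ℕ} {α : Type*} [LinearOrder α] {f : Fin n → α}
    (hf : Function.Injective f) (j : Fin n) :
    {i | f i ≤ f (Tuple.sort f j)}.ncard = j + 1 := by
  set σ := Tuple.sort f
  have hmono : StrictMono (f ∘ σ) :=
    (Tuple.monotone_sort f).strictMono_of_injective (hf.comp σ.injective)
  have himage : {i | f i ≤ f (σ j)} = σ '' Set.Iic j := by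
    ext i
    rw [σ.image_eq_preimage_symm, Set.mem_preimage, Set.mem_Iic, ← hmono.le_iff_le,
      Function.comp_apply, σ.apply_symm_apply]
    rfl
  rw [himage, Set.ncard_image_of_injective _ σ.injective, ← Finset.coe_Iic,
    Set.ncard_coe_finset, Fin.card_Iic]

section Configuration

variable {k : ℕ} {x : Fin k → Circle}

lemma NArc_le_of_gd_le [NeZero k] {σ : Equiv.Perm (Fin k)} {δ : ℝ}
    (hδ : ∀ i, gd (x i) (gridPt k (σ i)) ≤ δ) (a : ℝ) {ℓ : ℝ} (hℓ : 0 ≤ ℓ) :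
    (NArc k x a ℓ : ℝ) ≤ k * (ℓ + 2 * δ) / (2 * π) + 1 := by
  have hδ0 : 0 ≤ δ := (abs_nonneg _).trans (hδ 0)
  rw [NArc_eq_ncard]
  calc ((x ⁻¹' closedArc a ℓ).ncard : ℝ)
      ≤ (σ ⁻¹' {j | gridPt k j ∈ closedArc (a - δ) (ℓ + 2 * δ)}).ncard :=
        Nat.cast_le.2 (Set.ncard_le_ncard fun i hi => mem_closedArc_of_gd_le hi (hδ i))
    _ = {j | gridPt k j ∈ closedArc (a - δ) (ℓ + 2 * δ)}.ncard := by
        rw [Set.ncard_preimage_of_injective_subset_range σ.injective (by simp)]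
    _ ≤ _ := ncard_gridPt_mem_closedArc_le _ (by linarith)

lemma card_le_NArc_add_NArc (a ℓ : ℝ) :
    k ≤ NArc k x a ℓ + NArc k x (a + ℓ) (2 * π - ℓ) := by
  have := Set.ncard_union_le (x ⁻¹' closedArc a ℓ) (x ⁻¹' closedArc (a + ℓ) (2 * π - ℓ))
  rwa [← Set.preimage_union, closedArc_union_closedArc, Set.preimage_univ, Set.ncard_univ,
    Nat.card_eq_fintype_card, Fintype.card_fin] at this

lemma le_NArc_of_gd_le [NeZero k] {σ : Equiv.Perm (Fin k)} {δ : ℝ}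
    (hδ : ∀ i, gd (x i) (gridPt k (σ i)) ≤ δ) (a : ℝ) {ℓ : ℝ} (hℓ : ℓ ≤ 2 * π) :
    k * (ℓ - 2 * δ) / (2 * π) - 1 ≤ (NArc k x a ℓ : ℝ) := by
  have hcover : (k : ℝ) ≤ NArc k x a ℓ + NArc k x (a + ℓ) (2 * π - ℓ) := by
    exact_mod_cast card_le_NArc_add_NArc a ℓ
  have hrest := NArc_le_of_gd_le hδ (a + ℓ) (sub_nonneg.2 hℓ)
  have : (k : ℝ) * (2 * π - ℓ + 2 * δ) / (2 * π) = k - k * (ℓ - 2 * δ) / (2 * π) := by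
    field_simp; ring
  linarith

lemma abs_VArc_le_of_gd_le [NeZero k] {σ : Equiv.Perm (Fin k)} {δ : ℝ}
    (hδ : ∀ i, gd (x i) (gridPt k (σ i)) ≤ δ) (a : ℝ) {ℓ : ℝ} (hℓ0 : 0 ≤ ℓ) (hℓ2 : ℓ ≤ 2 * π) :
    |VArc k x a ℓ| ≤ k / π * δ + 1 := by
  have hupper := NArc_le_of_gd_le hδ a hℓ0
  have hlower := le_NArc_of_gd_le hδ a hℓ2
  have h1 : (k : ℝ) * (ℓ + 2 * δ) / (2 * π) = k * ℓ / (2 * π) + k / π * δ := by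
    field_simp
  have h2 : (k : ℝ) * (ℓ - 2 * δ) / (2 * π) = k * ℓ / (2 * π) - k / π * δ := by
    field_simp
  rw [VArc, abs_sub_le_iff]
  constructor <;> linarith

lemma NArc_zero_sort {θ : Fin k → ℝ}
    (hθ : ∀ i, θ i ∈ Set.Ico 0 (2 * π)) (hx : ∀ i, x i = Circle.exp (θ i))
    (hinj : Function.Injective θ) (j : Fin k) :
    NArc k x 0 (θ (Tuple.sort θ j)) = j + 1 := by
  rw [NArc_eq_ncard, ← Tuple.ncard_setOf_le_sort hinj j]
  congr 1
  ext i
  rw [Set.mem_preimage, hx i, exp_mem_closedArc_zero_iff (hθ i) (hθ _).2]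
  rfl

noncomputable def arcDiscrepancy (k : ℕ) (x : Fin k → Circle) : ℝ :=
  sSup {v : ℝ | ∃ a : ℝ, ∃ ℓ ∈ Set.Icc (0 : ℝ) (2 * π), v = |VArc k x a ℓ|}

lemma abs_VArc_le_arcDiscrepancy [NeZero k] (a : ℝ) {ℓ : ℝ} (hℓ0 : 0 ≤ ℓ) (hℓ2 : ℓ ≤ 2 * π) :
    |VArc k x a ℓ| ≤ arcDiscrepancy k x := by
  refine le_csSup ⟨k / π * π + 1, ?_⟩ ⟨a, ℓ, ⟨hℓ0, hℓ2⟩, rfl⟩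
  rintro _ ⟨a', ℓ', ⟨hℓ0', hℓ2'⟩, rfl⟩
  exact abs_VArc_le_of_gd_le (σ := 1) (fun _ => Complex.abs_arg_le_pi _) a' hℓ0' hℓ2'

lemma arcDiscrepancy_le_of_gd_le [NeZero k] {σ : Equiv.Perm (Fin k)} {δ : ℝ}
    (hδ : ∀ i, gd (x i) (gridPt k (σ i)) ≤ δ) :
    arcDiscrepancy k x ≤ k / π * δ + 1 := by
  refine csSup_le ⟨_, 0, 0, ⟨le_rfl, by positivity⟩, rfl⟩ ?_
  rintro _ ⟨a, ℓ, ⟨hℓ0, hℓ2⟩, rfl⟩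
  exact abs_VArc_le_of_gd_le hδ a hℓ0 hℓ2

lemma dinftyPi_le_of_gd_le [NeZero k] (σ : Equiv.Perm (Fin k)) {δ : ℝ}
    (hδ : ∀ i, gd (x i) (gridPt k (σ i)) ≤ δ) : dinftyPi k x ≤ δ :=
  (ciInf_le (Finite.bddBelow_range _) σ).trans (ciSup_le hδ)

lemma arcDiscrepancy_le_dinftyPi [NeZero k] :
    arcDiscrepancy k x ≤ k / π * dinftyPi k x + 1 := by
  rw [dinftyPi, Real.mul_iInf_of_nonneg (by positivity), ← sub_le_iff_le_add]
  refine le_ciInf fun σ => sub_le_iff_le_add.2 (arcDiscrepancy_le_of_gd_le (σ := σ) fun i => ?_)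
  exact le_ciSup (Finite.bddAbove_range fun i => gd (x i) (gridPt k (σ i))) i

lemma dinftyPi_le_arcDiscrepancy [NeZero k] (hx : Function.Injective x) :
    k / π * dinftyPi k x ≤ 2 * arcDiscrepancy k x + 2 := by
  have hk : (0 : ℝ) < k := Nat.cast_pos.2 (Nat.pos_of_neZero k)
  choose θ hθ hxθ using fun i => Circle.exists_mem_Ico_exp_eq 0 (x i)
  simp only [zero_add] at hθ
  have hinj : Function.Injective θ := fun i j h => hx (by rw [← hxθ i, ← hxθ j, h])
  set σ := Tuple.sort θ
  set s := arcDiscrepancy k x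
  have hclose : ∀ j, gd (x (σ j)) (gridPt k j) ≤ 2 * π / k * (1 + s) := by
    intro j
    have hV := abs_VArc_le_arcDiscrepancy (x := x) 0 (hθ (σ j)).1 (hθ (σ j)).2.le
    rw [VArc, NArc_zero_sort hθ (fun i => (hxθ i).symm) hinj] at hV
    have e : θ (σ j) - 2 * π * (j : ℕ) / k
        = 2 * π / k * (1 - (((j + 1 : ℕ) : ℝ) - k * θ (σ j) / (2 * π))) := by
      field_simp; push_cast; ring
    rw [← hxθ (σ j), gridPt]
    calc gd (Circle.exp (θ (σ j))) (Circle.exp (2 * π * (j : ℕ) / k))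
        ≤ |θ (σ j) - 2 * π * (j : ℕ) / k| := gd_exp_exp_le _ _
      _ = 2 * π / k * |1 - (((j + 1 : ℕ) : ℝ) - k * θ (σ j) / (2 * π))| := by
        rw [e, abs_mul, abs_of_pos (by positivity)]
      _ ≤ 2 * π / k * (1 + s) := by
        gcongr
        exact (abs_sub _ _).trans (by rw [abs_one]; linarith)
  calc k / π * dinftyPi k x ≤ k / π * (2 * π / k * (1 + s)) := by
        gcongr
        exact dinftyPi_le_of_gd_le σ.symm fun i => by simpa using hclose (σ.symm i)
    _ = 2 * s + 2 := by field_simp; ring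

end Configuration

theorem stmt15_general (k : ℕ) (hk1 : 1 ≤ k)
    (x : Fin k → Circle) (hdist : Function.Injective x) :
    sSup {v : ℝ | ∃ a : ℝ, ∃ ℓ ∈ Set.Icc (0 : ℝ) (2 * π), v = |VArc k x a ℓ|} - 4 ≤
        (k : ℝ) / π * dinftyPi k x ∧
    (k : ℝ) / π * dinftyPi k x ≤
      2 * sSup {v : ℝ | ∃ a : ℝ, ∃ ℓ ∈ Set.Icc (0 : ℝ) (2 * π), v = |VArc k x a ℓ|} + 4 := by
  have : NeZero k := ⟨Nat.one_le_iff_ne_zero.1 hk1⟩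
  have hlower := arcDiscrepancy_le_dinftyPi (x := x)
  have hupper := dinftyPi_le_arcDiscrepancy hdist
  unfold arcDiscrepancy at hlower hupper
  constructor <;> linarith

/-- Equivalence between the arc discrepancy `sup_I |V_I(x)|` and the uniform
distance to the regular configurations (Lemma B.6 of the paper). -/
theorem stmt15 (n k : ℕ) (hk1 : 1 ≤ k) (hkn : k ≤ n)
    (x : Fin k → Circle) (hdist : Function.Injective x) :
    sSup {v : ℝ | ∃ a : ℝ, ∃ ℓ ∈ Set.Icc (0 : ℝ) (2 * π), v = |VArc k x a ℓ|} - 4 ≤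
        (k : ℝ) / π * dinftyPi k x ∧
    (k : ℝ) / π * dinftyPi k x ≤
      2 * sSup {v : ℝ | ∃ a : ℝ, ∃ ℓ ∈ Set.Icc (0 : ℝ) (2 * π), v = |VArc k x a ℓ|} + 4 :=
  stmt15_general k hk1 x hdist
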